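/- Under the hypotheses of the previous setup, the two conditions 'r_{g, mα} is independent of m for all g' and 'r̃_{g, mα} := Σ_{k|m} k^{2g−3} μ(k) R_{g, (m/k)α} is independent of m for all g' are equivalent, where R is related to r by the Gopakumar–Vafa expansion. -/

import Mathlib

open PowerSeries ArithmeticFunction
open scoped ArithmeticFunction.Moebius ArithmeticFunction.zeta

/-- The formal power series `(1/2)·sin(u/2) ∈ ℚ⟦u⟧`. -/
noncomputable def sinHalf : PowerSeries ℚ :=
  PowerSeries.C (R := ℚ) (1 / 2) * PowerSeries.rescale (1 / 2) (PowerSeries.sin ℚ)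

/-- The coefficients `a_{g,g̃}` of `((1/2) sin(u/2))^{2g−2} = Σ_{g̃} a_{g,g̃} u^{2g̃−2}`. -/
noncomputable def aGV (g gt : ℕ) : ℚ :=
  (((sinHalf : LaurentSeries ℚ)) ^ (2 * (g : ℤ) - 2)).coeff (2 * (gt : ℤ) - 2)

lemma sinHalf_constantCoeff : PowerSeries.constantCoeff sinHalf = 0 := by
  have : PowerSeries.coeff 0 sinHalf = 0 := by
    simp [sinHalf, PowerSeries.coeff_rescale, PowerSeries.sin]
  simpa using this

lemma sinHalf_coeff_one : PowerSeries.coeff 1 sinHalf = 1 / 4 := by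
  simp [sinHalf, PowerSeries.coeff_rescale, PowerSeries.sin]
  norm_num

/-- The power series `h` with `sinHalf = X * h`. -/
noncomputable def hGV : PowerSeries ℚ :=
  Classical.choose (PowerSeries.X_dvd_iff.mpr sinHalf_constantCoeff)

lemma sinHalf_eq_X_mul : sinHalf = PowerSeries.X * hGV :=
  Classical.choose_spec (PowerSeries.X_dvd_iff.mpr sinHalf_constantCoeff)

lemma hGV_constantCoeff : PowerSeries.constantCoeff hGV = 1 / 4 := by
  have h := sinHalf_coeff_one
  rw [sinHalf_eq_X_mul] at h
  have := PowerSeries.coeff_succ_X_mul 0 hGV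
  rw [zero_add] at this
  rw [this] at h
  simpa using h

lemma hGV_isUnit : IsUnit hGV := by
  rw [PowerSeries.isUnit_iff_constantCoeff]
  rw [hGV_constantCoeff]
  norm_num

/-- `hGV` as a unit. -/
noncomputable def hGVu : (PowerSeries ℚ)ˣ := hGV_isUnit.unit

lemma hGVu_val : (hGVu : PowerSeries ℚ) = hGV := rfl

lemma aGV_eq (g gt : ℕ) :
    aGV g gt = if (2 * (gt : ℤ) - 2 * (g : ℤ)) < 0 then 0
      else PowerSeries.coeff (2 * (gt : ℤ) - 2 * (g : ℤ)).natAbs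
        ((hGVu ^ (2 * (g : ℤ) - 2) : (PowerSeries ℚ)ˣ) : PowerSeries ℚ) := by
  classical
  set z : ℤ := 2 * (g : ℤ) - 2 with hz
  set φ : PowerSeries ℚ →+* LaurentSeries ℚ := HahnSeries.ofPowerSeries ℤ ℚ with hφ
  have hcoe : (sinHalf : LaurentSeries ℚ)
      = HahnSeries.single (1 : ℤ) (1 : ℚ) * ((hGV : PowerSeries ℚ) : LaurentSeries ℚ) := by
    rw [sinHalf_eq_X_mul, PowerSeries.coe_mul, PowerSeries.coe_X]
  have hunit : ((hGV : PowerSeries ℚ) : LaurentSeries ℚ)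
      = ((Units.map (φ : PowerSeries ℚ →* LaurentSeries ℚ) hGVu : (LaurentSeries ℚ)ˣ)
        : LaurentSeries ℚ) := rfl
  have hpow : ((hGV : PowerSeries ℚ) : LaurentSeries ℚ) ^ z
      = (((hGVu ^ z : (PowerSeries ℚ)ˣ) : PowerSeries ℚ) : LaurentSeries ℚ) := by
    rw [hunit, ← Units.val_zpow_eq_zpow_val, ← map_zpow]
    rfl
  have hsingle : (HahnSeries.single (1 : ℤ) (1 : ℚ) : LaurentSeries ℚ) ^ z
      = HahnSeries.single z (1 : ℚ) := (RatFunc.single_zpow z).symm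
  have : (sinHalf : LaurentSeries ℚ) ^ z
      = HahnSeries.single z (1 : ℚ)
        * (((hGVu ^ z : (PowerSeries ℚ)ˣ) : PowerSeries ℚ) : LaurentSeries ℚ) := by
    rw [hcoe, mul_zpow, hsingle, hpow]
  rw [aGV, ← hz, this]
  have hidx : (2 * (gt : ℤ) - 2) = (2 * (gt : ℤ) - 2 * (g : ℤ)) + z := by rw [hz]; ring
  rw [hidx, HahnSeries.coeff_single_mul_add, one_mul, PowerSeries.coeff_coe]

lemma aGV_eq_zero {g gt : ℕ} (h : gt < g) : aGV g gt = 0 := by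
  rw [aGV_eq, if_pos]
  have : (gt : ℤ) < (g : ℤ) := by exact_mod_cast h
  linarith

lemma aGV_diag_ne_zero (g : ℕ) : aGV g g ≠ 0 := by
  rw [aGV_eq, if_neg (by omega), sub_self, Int.natAbs_zero,
    PowerSeries.coeff_zero_eq_constantCoeff]
  have hu : IsUnit ((hGVu ^ (2 * (g : ℤ) - 2) : (PowerSeries ℚ)ˣ) : PowerSeries ℚ) :=
    (hGVu ^ (2 * (g : ℤ) - 2)).isUnit
  have := hu.map (PowerSeries.constantCoeff (R := ℚ))
  exact this.ne_zero

/-- with `R` related to the Gopakumar–Vafa invariants `r` by the GV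
expansion (stated coefficient-wise), and `r̃` obtained from `R` by Möbius inversion,
the invariants `r_{g,m}` are independent of `m` for all `g` if and only if the
invariants `r̃_{g,m}` are independent of `m` for all `g`. -/
theorem gv_independence_equivalence
    (r : ℕ → ℕ → ℚ) (hfin : ∀ m : ℕ, (Function.support fun g => r g m).Finite)
    (R : ℕ → ℕ → ℚ)
    (hR : ∀ (gt n : ℕ), 0 < n →
      R gt n = ∑ k ∈ n.divisors,
        (1 / (k : ℚ)) * ∑ᶠ g : ℕ, r g (n / k) * ((k : ℚ) ^ (2 * (gt : ℤ) - 2) * aGV g gt))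
    (rt : ℕ → ℕ → ℚ)
    (hrt : ∀ (g m : ℕ), 0 < m →
      rt g m = ∑ k ∈ m.divisors,
        (moebius k : ℚ) * (k : ℚ) ^ (2 * (g : ℤ) - 3) * R g (m / k)) :
    (∀ g m m' : ℕ, 0 < m → 0 < m' → r g m = r g m') ↔
      (∀ g m m' : ℕ, 0 < m → 0 < m' → rt g m = rt g m') := by
  classical
  set S : ℕ → ℕ → ℚ := fun g n => ∑ᶠ g' : ℕ, r g' n * aGV g' g with hS
  have hSfin : ∀ (g n : ℕ), (Function.support fun g' => r g' n * aGV g' g).Finite := by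
    intro g n
    refine (hfin n).subset ?_
    intro x hx
    simp only [Function.mem_support] at hx ⊢
    intro h
    exact hx (by rw [h, zero_mul])
  have key : ∀ g m, 0 < m → rt g m = S g m := by
    intro g m hm
    set z : ℤ := 2 * (g : ℤ) - 3 with hz
    have hR' : ∀ n, 0 < n → R g n = ∑ k ∈ n.divisors, (k : ℚ) ^ z * S g (n / k) := by
      intro n hn
      rw [hR g n hn]
      refine Finset.sum_congr rfl fun k hk => ?_
      have hkpos : 0 < k := Nat.pos_of_mem_divisors hk
      have hk0 : (k : ℚ) ≠ 0 := Nat.cast_ne_zero.mpr hkpos.ne'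
      have heq : ∑ᶠ g' : ℕ, r g' (n / k) * ((k : ℚ) ^ (2 * (g : ℤ) - 2) * aGV g' g)
          = (k : ℚ) ^ (2 * (g : ℤ) - 2) * S g (n / k) := by
        rw [hS]
        rw [mul_finsum _ _]
        exact finsum_congr fun g' => by ring
      rw [heq]
      have hzz : (2 * (g : ℤ) - 2) = z + 1 := by rw [hz]; ring
      rw [hzz, zpow_add_one₀ hk0]
      field_simp
    set F1 : ArithmeticFunction ℚ :=
      ⟨fun k => (moebius k : ℚ) * (k : ℚ) ^ z, by simp⟩ with hF1
    set F2 : ArithmeticFunction ℚ :=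
      ⟨fun k => if k = 0 then 0 else (k : ℚ) ^ z, by simp⟩ with hF2
    set F3 : ArithmeticFunction ℚ :=
      ⟨fun n => if n = 0 then 0 else S g n, by simp⟩ with hF3
    have h23 : ∀ n, 0 < n → (F2 * F3) n = R g n := by
      intro n hn
      rw [mul_apply, Nat.sum_divisorsAntidiagonal (fun a b => F2 a * F3 b), hR' n hn]
      refine Finset.sum_congr rfl fun k hk => ?_
      have hkpos : 0 < k := Nat.pos_of_mem_divisors hk
      have hdvd : k ∣ n := (Nat.mem_divisors.mp hk).1
      have hnk : 0 < n / k := Nat.div_pos (Nat.le_of_dvd hn hdvd) hkpos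
      rw [hF2, hF3]
      simp only [ArithmeticFunction.coe_mk, if_neg hkpos.ne', if_neg hnk.ne']
    have h12 : F1 * F2 = 1 := by
      ext n
      rcases eq_or_ne n 0 with rfl | hn
      · simp
      rw [mul_apply, one_apply]
      have hmz : (μ * (ζ : ArithmeticFunction ℤ)) n = if n = 1 then 1 else 0 := by
        rw [moebius_mul_coe_zeta, one_apply]
      rw [mul_apply] at hmz
      calc ∑ p ∈ n.divisorsAntidiagonal, F1 p.1 * F2 p.2
          = ∑ p ∈ n.divisorsAntidiagonal,
              ((μ p.1 * (ζ : ArithmeticFunction ℤ) p.2 : ℤ) : ℚ) * (n : ℚ) ^ z := by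
            refine Finset.sum_congr rfl fun p hp => ?_
            obtain ⟨hpn, hn0⟩ := Nat.mem_divisorsAntidiagonal.mp hp
            have h1 : p.1 ≠ 0 := by
              intro h; exact hn (by rw [← hpn, h, zero_mul])
            have h2 : p.2 ≠ 0 := by
              intro h; exact hn (by rw [← hpn, h, mul_zero])
            rw [hF1, hF2]
            simp only [ArithmeticFunction.coe_mk, if_neg h2]
            rw [ArithmeticFunction.natCoe_apply, ArithmeticFunction.zeta_apply_ne h2]
            have hmulz : (p.1 : ℚ) ^ z * (p.2 : ℚ) ^ z = (n : ℚ) ^ z := by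
              rw [← mul_zpow]
              congr 1
              exact_mod_cast congrArg (Nat.cast : ℕ → ℚ) hpn
            push_cast
            rw [mul_assoc, hmulz]
            ring
        _ = ((∑ p ∈ n.divisorsAntidiagonal, μ p.1 * (ζ : ArithmeticFunction ℤ) p.2 : ℤ) : ℚ)
              * (n : ℚ) ^ z := by
            rw [← Finset.sum_mul]
            push_cast
            rfl
        _ = if n = 1 then 1 else 0 := by
            rw [hmz]
            rcases eq_or_ne n 1 with rfl | h1
            · simp
            · simp [h1]
    have hmul : rt g m = (F1 * (F2 * F3)) m := by
      rw [hrt g m hm, mul_apply, Nat.sum_divisorsAntidiagonal (fun a b => F1 a * (F2 * F3) b)]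
      refine Finset.sum_congr rfl fun k hk => ?_
      have hkpos : 0 < k := Nat.pos_of_mem_divisors hk
      have hdvd : k ∣ m := (Nat.mem_divisors.mp hk).1
      have hmk : 0 < m / k := Nat.div_pos (Nat.le_of_dvd hm hdvd) hkpos
      rw [h23 _ hmk, hF1]
      simp only [ArithmeticFunction.coe_mk]
      rw [hz]
    rw [hmul, ← mul_assoc, h12, one_mul, hF3]
    simp only [ArithmeticFunction.coe_mk, if_neg hm.ne']
  constructor
  · intro h g m m' hm hm'
    rw [key g m hm, key g m' hm', hS]
    exact finsum_congr fun g' => by rw [h g' m m' hm hm']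
  · intro h g m m' hm hm'
    induction g using Nat.strong_induction_on with
    | _ g ih =>
      have h0 : rt g m = rt g m' := h g m m' hm hm'
      rw [key g m hm, key g m' hm', hS] at h0
      have hsub : ∑ᶠ g' : ℕ, (r g' m * aGV g' g - r g' m' * aGV g' g) = 0 := by
        rw [finsum_sub_distrib (hSfin g m) (hSfin g m')]
        exact sub_eq_zero.mpr h0
      have hvanish : ∀ x, x ≠ g →
          (fun g' => r g' m * aGV g' g - r g' m' * aGV g' g) x = 0 := by
        intro x hx
        rcases lt_or_gt_of_ne hx with hlt | hgt
        · simp only [ih x hlt, sub_self]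
        · simp only [aGV_eq_zero hgt, mul_zero, sub_self]
      have hsingle : (r g m * aGV g g - r g m' * aGV g g) = 0 :=
        (finsum_eq_single _ g hvanish).symm.trans hsub
      have := sub_eq_zero.mp hsingle
      exact mul_right_cancel₀ (aGV_diag_ne_zero g) this
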